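/- Let E and F be Banach spaces, S ∈ L(E,F), and let M be a non-reflexive closed subspace of E with inclusion map J : M → E such that S∘J is an isomorphic embedding (bounded below). Then R(S∘J) : M**/M → F**/F is an isomorphic embedding, i.e., there exists c > 0 such that ‖R(S∘J)(x** + M)‖ ≥ c·‖x** + M‖ for all x** ∈ M**. -/

import Mathlib

open NormedSpace Metric Pointwise Filter

noncomputable section

variable (𝕜 : Type*) [RCLike 𝕜]

/-- A Banach space over `𝕜`, bundled. -/
structure BanachPkg where
  carrier : Type
  [inst1 : NormedAddCommGroup carrier]
  [inst2 : NormedSpace 𝕜 carrier]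
  [inst3 : CompleteSpace carrier]

attribute [instance] BanachPkg.inst1 BanachPkg.inst2 BanachPkg.inst3

variable {𝕜}

section Defs

variable {E F : Type*} [SeminormedAddCommGroup E] [NormedSpace 𝕜 E]
  [SeminormedAddCommGroup F] [NormedSpace 𝕜 F]

/-- A continuous linear operator is weakly compact if the image of the closed unit
ball is relatively compact in the weak topology. -/
def WCompact (T : E →L[𝕜] F) : Prop :=
  IsCompact (closure ((toWeakSpace 𝕜 F) '' (T '' closedBall 0 1)))

/-- The Banach-space adjoint of a continuous linear operator. -/
def dualOp (S : E →L[𝕜] F) : StrongDual 𝕜 F →L[𝕜] StrongDual 𝕜 E :=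
  (ContinuousLinearMap.compL 𝕜 E F 𝕜).flip S

@[simp] theorem dualOp_apply (S : E →L[𝕜] F) (f : StrongDual 𝕜 F) (x : E) :
    dualOp S f x = f (S x) := rfl

/-- The second adjoint `S** : E** → F**`. -/
def bidualOp (S : E →L[𝕜] F) : StrongDual 𝕜 (StrongDual 𝕜 E) →L[𝕜] StrongDual 𝕜 (StrongDual 𝕜 F) :=
  dualOp (dualOp S)

end Defs

/-- The bidual of a normed space. -/
abbrev Bidual (𝕜 : Type*) [RCLike 𝕜] (E : Type*) [SeminormedAddCommGroup E]
    [NormedSpace 𝕜 E] : Type _ :=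
  StrongDual 𝕜 (StrongDual 𝕜 E)

instance Bidual.instSeminormedAddCommGroup (𝕜 : Type*) [RCLike 𝕜] (E : Type*)
    [SeminormedAddCommGroup E] [NormedSpace 𝕜 E] : SeminormedAddCommGroup (Bidual 𝕜 E) :=
  inferInstance

instance Bidual.instNormedSpace (𝕜 : Type*) [RCLike 𝕜] (E : Type*)
    [SeminormedAddCommGroup E] [NormedSpace 𝕜 E] : NormedSpace 𝕜 (Bidual 𝕜 E) :=
  inferInstance

/-- The quotient `E**/E` of the bidual by the canonical image of `E`. -/
abbrev BidualQuot (𝕜 : Type*) [RCLike 𝕜] (E : Type*) [NormedAddCommGroup E]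
    [NormedSpace 𝕜 E] : Type _ :=
  Bidual 𝕜 E ⧸ LinearMap.range (inclusionInDoubleDual 𝕜 E : E →ₗ[𝕜] StrongDual 𝕜 (StrongDual 𝕜 E))

section Defs3

variable {E F : Type*} [NormedAddCommGroup E] [NormedSpace 𝕜 E]
  [NormedAddCommGroup F] [NormedSpace 𝕜 F]

/-- `RS` is the operator `R(S) : E**/E → F**/F` induced by `S`, i.e. it satisfies
`R(S)(x** + E) = S** x** + F`  (`R(S) = 0` iff `S` is weakly compact). -/
def IsRRep (S : E →L[𝕜] F) (RS : BidualQuot 𝕜 E →L[𝕜] BidualQuot 𝕜 F) : Prop :=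
  ∀ u : Bidual 𝕜 E,
    RS (Submodule.Quotient.mk u) = Submodule.Quotient.mk (bidualOp S u)

end Defs3

/-!
Put `T = S ∘ J`, bounded below by `c`, and `u = T** x`. Bounded below passes to `T**`, since by
Hahn–Banach `T*` is onto with a norm-controlled preimage. Given `y ∈ F` with `u - y` nearly as
short as `u + F`, every functional vanishing on `T(M)` is killed by `u`, so `y` lies within
`‖u - y‖` of `T(M)`, say near `T m`. Then `c ‖x - m‖ ≤ ‖u - T m‖ ≤ 2 ‖u - y‖`, whence
`c ‖x + M‖ ≤ 2 ‖u + F‖`.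
-/

section Seminormed

variable {E F : Type*} [SeminormedAddCommGroup E] [NormedSpace 𝕜 E]
  [SeminormedAddCommGroup F] [NormedSpace 𝕜 F]

theorem norm_mk_range_le_norm_bidualOp_sub (T : E →L[𝕜] F) (x : Bidual 𝕜 E) (y : F) :
    ‖(Submodule.Quotient.mk y : F ⧸ LinearMap.range (T : E →ₗ[𝕜] F))‖ ≤
      ‖bidualOp T x - inclusionInDoubleDual 𝕜 F y‖ := by
  refine norm_le_dual_bound 𝕜 _ (norm_nonneg _) fun f => ?_
  let φ := f.comp (LinearMap.range (T : E →ₗ[𝕜] F)).mkQL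
  have hφ : ‖φ‖ ≤ ‖f‖ := φ.opNorm_le_bound (norm_nonneg _) fun z =>
    (f.le_opNorm _).trans (by gcongr; exact Submodule.Quotient.norm_mk_le _ z)
  have hTφ : bidualOp T x φ = 0 := by
    have : dualOp T φ = 0 := ContinuousLinearMap.ext fun e => by
      have hTe : (Submodule.Quotient.mk (T e) : F ⧸ LinearMap.range (T : E →ₗ[𝕜] F)) = 0 :=
        (Submodule.Quotient.mk_eq_zero _).2 (LinearMap.mem_range_self (T : E →ₗ[𝕜] F) e)
      simp [φ, hTe]
    simp [bidualOp, this]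
  calc ‖f (Submodule.Quotient.mk y)‖ = ‖(bidualOp T x - inclusionInDoubleDual 𝕜 F y) φ‖ := by
        simp [hTφ, φ]
    _ ≤ ‖bidualOp T x - inclusionInDoubleDual 𝕜 F y‖ * ‖φ‖ := ContinuousLinearMap.le_opNorm _ _
    _ ≤ ‖bidualOp T x - inclusionInDoubleDual 𝕜 F y‖ * ‖f‖ := by gcongr

end Seminormed

section BoundedBelow

variable {E F : Type*} [NormedAddCommGroup E] [NormedSpace 𝕜 E]
  [NormedAddCommGroup F] [NormedSpace 𝕜 F]
  {T : E →L[𝕜] F} {c : ℝ}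

theorem injective_of_mul_norm_le (hc : 0 < c) (hT : ∀ x, c * ‖x‖ ≤ ‖T x‖) :
    Function.Injective T :=
  (injective_iff_map_eq_zero T).2 fun x hx => by
    have := hT x
    rw [hx, norm_zero] at this
    exact norm_le_zero_iff.1 (nonpos_of_mul_nonpos_right this hc)

theorem exists_dualOp_eq_of_mul_norm_le (hc : 0 < c) (hT : ∀ x, c * ‖x‖ ≤ ‖T x‖)
    (g : StrongDual 𝕜 E) : ∃ f : StrongDual 𝕜 F, dualOp T f = g ∧ ‖f‖ ≤ c⁻¹ * ‖g‖ := by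
  let e := LinearEquiv.ofInjective (T : E →ₗ[𝕜] F) (injective_of_mul_norm_le hc hT)
  have he : ∀ n, ‖g (e.symm n)‖ ≤ c⁻¹ * ‖g‖ * ‖n‖ := fun n => by
    have hn : c * ‖e.symm n‖ ≤ ‖n‖ := by
      have hTe : T (e.symm n) = n := LinearEquiv.ofInjective_symm_apply (f := (T : E →ₗ[𝕜] F)) n
      simpa only [hTe, Submodule.coe_norm] using hT (e.symm n)
    calc ‖g (e.symm n)‖ ≤ ‖g‖ * ‖e.symm n‖ := g.le_opNorm _
      _ ≤ ‖g‖ * (c⁻¹ * ‖n‖) := by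
        gcongr
        rwa [le_inv_mul_iff₀ hc]
      _ = c⁻¹ * ‖g‖ * ‖n‖ := by ring
  obtain ⟨f, hfg, hf⟩ := exists_extension_norm_eq _
    (LinearMap.mkContinuous (g.toLinearMap ∘ₗ e.symm.toLinearMap) _ he)
  refine ⟨f, ContinuousLinearMap.ext fun x => ?_, ?_⟩
  · simpa [e] using hfg (e x)
  · rw [hf]
    exact LinearMap.mkContinuous_norm_le _ (by positivity) _

theorem mul_norm_le_norm_bidualOp (hc : 0 < c) (hT : ∀ x, c * ‖x‖ ≤ ‖T x‖)
    (u : Bidual 𝕜 E) : c * ‖u‖ ≤ ‖bidualOp T u‖ := by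
  rw [← le_inv_mul_iff₀ hc]
  refine u.opNorm_le_bound (by positivity) fun g => ?_
  obtain ⟨f, rfl, hf⟩ := exists_dualOp_eq_of_mul_norm_le hc hT g
  calc ‖u (dualOp T f)‖ = ‖bidualOp T u f‖ := rfl
    _ ≤ ‖bidualOp T u‖ * ‖f‖ := (bidualOp T u).le_opNorm f
    _ ≤ ‖bidualOp T u‖ * (c⁻¹ * ‖dualOp T f‖) := by gcongr
    _ = c⁻¹ * ‖bidualOp T u‖ * ‖dualOp T f‖ := by ring

theorem mul_norm_mk_le_two_mul_norm_bidualOp_sub (hc : 0 < c) (hT : ∀ x, c * ‖x‖ ≤ ‖T x‖)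
    (x : Bidual 𝕜 E) (y : F) :
    c * ‖(Submodule.Quotient.mk x : BidualQuot 𝕜 E)‖ ≤
      2 * ‖bidualOp T x - inclusionInDoubleDual 𝕜 F y‖ := by
  set ι := inclusionInDoubleDual 𝕜 F
  refine le_of_forall_pos_lt_add fun δ hδ => ?_
  obtain ⟨w, hw, hwy⟩ := Submodule.Quotient.norm_mk_lt
    (Submodule.Quotient.mk y : F ⧸ LinearMap.range (T : E →ₗ[𝕜] F)) hδ
  obtain ⟨m, hm⟩ := (Submodule.Quotient.eq _).1 hw.symm
  have hxm : (Submodule.Quotient.mk x : BidualQuot 𝕜 E) =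
      Submodule.Quotient.mk (x - inclusionInDoubleDual 𝕜 E m) :=
    (Submodule.Quotient.eq _).2 (by simp)
  have hTm : bidualOp T (x - inclusionInDoubleDual 𝕜 E m) = (bidualOp T x - ι y) + ι w := by
    rw [map_sub, show bidualOp T (inclusionInDoubleDual 𝕜 E m) = ι (T m) from rfl,
      show T m = y - w from hm, map_sub]
    abel
  calc c * ‖(Submodule.Quotient.mk x : BidualQuot 𝕜 E)‖
      ≤ c * ‖x - inclusionInDoubleDual 𝕜 E m‖ := by
        rw [hxm]; gcongr; exact Submodule.Quotient.norm_mk_le _ _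
    _ ≤ ‖bidualOp T (x - inclusionInDoubleDual 𝕜 E m)‖ := mul_norm_le_norm_bidualOp hc hT _
    _ ≤ ‖bidualOp T x - ι y‖ + ‖w‖ := by
        rw [hTm]; exact (norm_add_le _ _).trans (by gcongr; exact double_dual_bound 𝕜 F w)
    _ < 2 * ‖bidualOp T x - ι y‖ + δ := by
        linarith [norm_mk_range_le_norm_bidualOp_sub T x y]

theorem mul_norm_mk_le_two_mul_norm_mk_bidualOp (hc : 0 < c) (hT : ∀ x, c * ‖x‖ ≤ ‖T x‖)
    (x : Bidual 𝕜 E) :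
    c * ‖(Submodule.Quotient.mk x : BidualQuot 𝕜 E)‖ ≤
      2 * ‖(Submodule.Quotient.mk (bidualOp T x) : BidualQuot 𝕜 F)‖ := by
  have hu : ‖(Submodule.Quotient.mk (bidualOp T x) : BidualQuot 𝕜 F)‖ =
      Metric.infDist (bidualOp T x) (Set.range (inclusionInDoubleDual 𝕜 F)) :=
    QuotientAddGroup.norm_mk _
  rw [← div_le_iff₀' two_pos, hu, Metric.le_infDist (Set.range_nonempty _)]
  rintro _ ⟨y, rfl⟩
  rw [div_le_iff₀' two_pos, dist_eq_norm]
  exact mul_norm_mk_le_two_mul_norm_bidualOp_sub hc hT x y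

end BoundedBelow

theorem RRep_embedding_of_embedding_restriction_general
    {E F : Type*} [NormedAddCommGroup E] [NormedSpace ℝ E]
    [NormedAddCommGroup F] [NormedSpace ℝ F]
    (S : E →L[ℝ] F) (M : Submodule ℝ E)
    (hemb : ∃ c > 0, ∀ m : M, c * ‖m‖ ≤ ‖(S.comp M.subtypeL) m‖)
    (RSJ : BidualQuot ℝ M →L[ℝ] BidualQuot ℝ F)
    (hRSJ : IsRRep (S.comp M.subtypeL) RSJ) :
    ∃ c > 0, ∀ x : Bidual ℝ M,
      c * ‖(Submodule.Quotient.mk x : BidualQuot ℝ M)‖ ≤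
        ‖RSJ (Submodule.Quotient.mk x)‖ := by
  obtain ⟨c, hc, hT⟩ := hemb
  refine ⟨c / 2, half_pos hc, fun x => ?_⟩
  rw [hRSJ x]
  linarith [mul_norm_mk_le_two_mul_norm_mk_bidualOp hc hT x]

/-- Let `M` be a non-reflexive closed subspace of `E` with inclusion `J : M → E` such that
`S ∘ J` is an isomorphic embedding. Then `R(S∘J) : M**/M → F**/F` is an isomorphic
embedding. -/
theorem RRep_embedding_of_embedding_restriction
    {E F : Type*} [NormedAddCommGroup E] [NormedSpace ℝ E] [CompleteSpace E]
    [NormedAddCommGroup F] [NormedSpace ℝ F] [CompleteSpace F]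
    (S : E →L[ℝ] F) (M : Submodule ℝ E) (hMclosed : IsClosed (M : Set E))
    (hMnonrefl : ¬ Function.Surjective (inclusionInDoubleDual ℝ M))
    (hemb : ∃ c > 0, ∀ m : M, c * ‖m‖ ≤ ‖(S.comp M.subtypeL) m‖)
    (RSJ : BidualQuot ℝ M →L[ℝ] BidualQuot ℝ F)
    (hRSJ : IsRRep (S.comp M.subtypeL) RSJ) :
    ∃ c > 0, ∀ x : Bidual ℝ M,
      c * ‖(Submodule.Quotient.mk x : BidualQuot ℝ M)‖ ≤
        ‖RSJ (Submodule.Quotient.mk x)‖ :=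
  RRep_embedding_of_embedding_restriction_general S M hemb RSJ hRSJ

end
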